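/- arXiv:1408.2116 — 3 statements merged into one kernel-verified Lean document; each statement's English description precedes it below -/
import Mathlib

section
/- Let C_1, ..., C_k be a minimal clique partition of a connected graph G with at least one edge, and let S be the union of all non-trivial parts (those of size ≥ 2). Then |S| ≤ 2·|S*| for every vertex cover S* of G; in particular, S is a 2-approximation of a minimum vertex cover. -/
/-- Let `C_1, ..., C_k` be a minimal clique partition of a connected graph
`G` with at least one edge, and let `S` be the union of the non-trivial parts (size ≥ 2).
Then `|S| ≤ 2·|S*|` for every vertex cover `S*` of `G`; in particular `S` is a
2-approximation of a minimum vertex cover. -/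
theorem nontrivial_cliques_two_approx {V : Type*} [Fintype V] [DecidableEq V]
    (G : SimpleGraph V) (hconn : G.Connected) (hedge : ∃ u v : V, G.Adj u v)
    (P : Finset (Finset V))
    (hcover : ∀ v : V, ∃ C ∈ P, v ∈ C)
    (hdisj : ∀ C ∈ P, ∀ D ∈ P, C ≠ D → Disjoint C D)
    (hne : ∀ C ∈ P, C.Nonempty)
    (hclique : ∀ C ∈ P, G.IsClique ↑C)
    (hmin : ∀ C ∈ P, ∀ D ∈ P, C ≠ D → ¬ G.IsClique ↑(C ∪ D)) :
    ∀ Sstar : Finset V, (∀ u v : V, G.Adj u v → u ∈ Sstar ∨ v ∈ Sstar) →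
      ((P.filter (fun C => 2 ≤ C.card)).biUnion id).card ≤ 2 * Sstar.card := by
  intro Sstar hvc
  set T := P.filter (fun C => 2 ≤ C.card) with hT
  have hTdisj : ∀ C ∈ T, ∀ D ∈ T, C ≠ D → Disjoint C D := by
    intro C hC D hD hne'
    exact hdisj C (Finset.mem_filter.1 hC).1 D (Finset.mem_filter.1 hD).1 hne'
  -- each nontrivial clique has at most one vertex outside Sstar
  have key : ∀ C ∈ T, C.card ≤ 2 * (C ∩ Sstar).card := by
    intro C hC
    obtain ⟨hCP, hC2⟩ := Finset.mem_filter.1 hC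
    have hsd : (C \ Sstar).card ≤ 1 := by
      by_contra h
      push_neg at h
      obtain ⟨a, ha, b, hb, hab⟩ := Finset.one_lt_card.1 h
      obtain ⟨haC, haS⟩ := Finset.mem_sdiff.1 ha
      obtain ⟨hbC, hbS⟩ := Finset.mem_sdiff.1 hb
      have hadj := hclique C hCP haC hbC hab
      rcases hvc a b hadj with h | h
      · exact haS h
      · exact hbS h
    have hsplit : (C ∩ Sstar).card + (C \ Sstar).card = C.card :=
      Finset.card_inter_add_card_sdiff C Sstar
    have h1 : 1 ≤ (C ∩ Sstar).card := by omega
    omega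
  calc (T.biUnion id).card = ∑ C ∈ T, C.card := by
        rw [Finset.card_biUnion]
        · simp
        · intro C hC D hD h; exact hTdisj C hC D hD h
    _ ≤ ∑ C ∈ T, 2 * (C ∩ Sstar).card := Finset.sum_le_sum key
    _ = 2 * ∑ C ∈ T, (C ∩ Sstar).card := by rw [Finset.mul_sum]
    _ = 2 * (T.biUnion (fun C => C ∩ Sstar)).card := by
        rw [Finset.card_biUnion]
        intro C hC D hD h
        exact Finset.disjoint_of_subset_left Finset.inter_subset_left
          (Finset.disjoint_of_subset_right Finset.inter_subset_left (hTdisj C hC D hD h))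
    _ ≤ 2 * Sstar.card := by
        refine Nat.mul_le_mul_left 2 (Finset.card_le_card ?_)
        intro x hx
        obtain ⟨C, _, hxC⟩ := Finset.mem_biUnion.1 hx
        exact (Finset.mem_inter.1 hxC).2
end

section
/- If a graph G admits a connected minimal clique partition (non-trivial cliques inducing a connected subgraph), then the union S of the non-trivial cliques is a connected vertex cover of G of size at most twice the size of any connected vertex cover of G. -/
/-!
Every edge meets a part of size at least two: otherwise both endpoints would be singleton parts
whose union is an edge, i.e. a clique, against minimality. A vertex cover misses at most one
vertex of each clique, so it meets every part of size at least two in at least half of its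
vertices; since the parts are disjoint, summing gives `|S| ≤ 2 |T|`.
-/

theorem Finset.card_biUnion_le_mul_card {α : Type*} [DecidableEq α] {F : Finset (Finset α)}
    (hF : (F : Set (Finset α)).PairwiseDisjoint id) {t : Finset α} {k : ℕ}
    (h : ∀ s ∈ F, s.card ≤ k * (s ∩ t).card) : (F.biUnion id).card ≤ k * t.card := by
  have hFt : (F : Set (Finset α)).PairwiseDisjoint (· ∩ t) :=
    hF.mono fun s => Finset.inter_subset_left
  calc (F.biUnion id).card = ∑ s ∈ F, s.card := Finset.card_biUnion hF
    _ ≤ ∑ s ∈ F, k * (s ∩ t).card := Finset.sum_le_sum h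
    _ = k * (F.biUnion (· ∩ t)).card := by rw [Finset.card_biUnion hFt, Finset.mul_sum]
    _ ≤ k * t.card := by
      gcongr
      exact Finset.biUnion_subset.mpr fun _ _ => Finset.inter_subset_right

namespace SimpleGraph

variable {V : Type*} [DecidableEq V] {G : SimpleGraph V}

theorem IsClique.card_sdiff_le_one_of_isVertexCover {s t : Finset V} (hs : G.IsClique (s : Set V))
    (ht : G.IsVertexCover (t : Set V)) : (s \ t).card ≤ 1 := by
  refine Finset.card_le_one.mpr fun a ha b hb => ?_
  rw [Finset.mem_sdiff] at ha hb
  by_contra hab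
  rcases ht (hs ha.1 hb.1 hab) with h | h
  · exact ha.2 h
  · exact hb.2 h

theorem IsClique.card_le_two_mul_card_inter_of_isVertexCover {s t : Finset V}
    (hs : G.IsClique (s : Set V)) (ht : G.IsVertexCover (t : Set V)) (h2 : 2 ≤ s.card) :
    s.card ≤ 2 * (s ∩ t).card := by
  have hsplit := Finset.card_inter_add_card_sdiff s t
  have hout := hs.card_sdiff_le_one_of_isVertexCover ht
  omega

theorem isVertexCover_biUnion_of_minimal_cliques {P : Finset (Finset V)}
    (hcover : ∀ v, ∃ C ∈ P, v ∈ C) (hmin : ∀ C ∈ P, ∀ D ∈ P, C ≠ D → ¬ G.IsClique ↑(C ∪ D)) :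
    G.IsVertexCover ↑((P.filter (fun C => 2 ≤ C.card)).biUnion id) := by
  set S := (P.filter (fun C => 2 ≤ C.card)).biUnion id
  have singleton_part : ∀ v ∉ S, ∃ C ∈ P, C = {v} := by
    intro v hv
    obtain ⟨C, hC, hvC⟩ := hcover v
    have hcard : C.card ≤ 1 := by
      by_contra! h
      exact hv (Finset.mem_biUnion.mpr ⟨C, Finset.mem_filter.mpr ⟨hC, h⟩, hvC⟩)
    exact ⟨C, hC, Finset.eq_singleton_iff_unique_mem.mpr
      ⟨hvC, fun x hx => Finset.card_le_one.mp hcard x hx v hvC⟩⟩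
  intro u v huv
  by_contra! h
  obtain ⟨C, hC, rfl⟩ := singleton_part u h.1
  obtain ⟨D, hD, rfl⟩ := singleton_part v h.2
  refine hmin _ hC _ hD (by simpa using huv.ne) ?_
  simpa [Finset.coe_pair, isClique_pair] using fun _ => huv

end SimpleGraph

theorem connected_clique_partition_gives_cvc_general {V : Type*} [DecidableEq V]
    (G : SimpleGraph V)
    (P : Finset (Finset V))
    (hcover : ∀ v : V, ∃ C ∈ P, v ∈ C)
    (hdisj : ∀ C ∈ P, ∀ D ∈ P, C ≠ D → Disjoint C D)
    (hclique : ∀ C ∈ P, G.IsClique ↑C)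
    (hmin : ∀ C ∈ P, ∀ D ∈ P, C ≠ D → ¬ G.IsClique ↑(C ∪ D))
    (hconnected : (G.induce (↑((P.filter (fun C => 2 ≤ C.card)).biUnion id) : Set V)).Connected) :
    letI S : Finset V := (P.filter (fun C => 2 ≤ C.card)).biUnion id
    (∀ u v : V, G.Adj u v → u ∈ S ∨ v ∈ S) ∧
    (G.induce (↑S : Set V)).Connected ∧
    (∀ T : Finset V, (∀ u v : V, G.Adj u v → u ∈ T ∨ v ∈ T) →
      (G.induce (↑T : Set V)).Connected → S.card ≤ 2 * T.card) := by
  refine ⟨fun _ _ huv => SimpleGraph.isVertexCover_biUnion_of_minimal_cliques hcover hmin huv,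
    hconnected, fun T hT _ => ?_⟩
  have hTcover : G.IsVertexCover (T : Set V) := fun u v => hT u v
  refine Finset.card_biUnion_le_mul_card ?_ fun C hC => ?_
  · exact fun C hC D hD => hdisj C (Finset.mem_filter.mp hC).1 D (Finset.mem_filter.mp hD).1
  · obtain ⟨hCP, hC2⟩ := Finset.mem_filter.mp hC
    exact (hclique C hCP).card_le_two_mul_card_inter_of_isVertexCover hTcover hC2

/-- If a connected graph `G` with at least one edge admits a connected
minimal clique partition (the non-trivial cliques inducing a connected subgraph), then
the union `S` of the non-trivial cliques is a connected vertex cover of `G` of size at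
most twice the size of any connected vertex cover of `G`. -/
theorem connected_clique_partition_gives_cvc {V : Type*} [Fintype V] [DecidableEq V]
    (G : SimpleGraph V) (hconn : G.Connected) (hedge : ∃ u v : V, G.Adj u v)
    (P : Finset (Finset V))
    (hcover : ∀ v : V, ∃ C ∈ P, v ∈ C)
    (hdisj : ∀ C ∈ P, ∀ D ∈ P, C ≠ D → Disjoint C D)
    (hne : ∀ C ∈ P, C.Nonempty)
    (hclique : ∀ C ∈ P, G.IsClique ↑C)
    (hmin : ∀ C ∈ P, ∀ D ∈ P, C ≠ D → ¬ G.IsClique ↑(C ∪ D))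
    (hconnected : (G.induce (↑((P.filter (fun C => 2 ≤ C.card)).biUnion id) : Set V)).Connected) :
    letI S : Finset V := (P.filter (fun C => 2 ≤ C.card)).biUnion id
    (∀ u v : V, G.Adj u v → u ∈ S ∨ v ∈ S) ∧
    (G.induce (↑S : Set V)).Connected ∧
    (∀ T : Finset V, (∀ u v : V, G.Adj u v → u ∈ T ∨ v ∈ T) →
      (G.induce (↑T : Set V)).Connected → S.card ≤ 2 * T.card) :=
  connected_clique_partition_gives_cvc_general G P hcover hdisj hclique hmin hconnected
end

section
/- In a depth-first-search spanning tree T of a connected graph G with at least 2 vertices, the set of internal vertices of T (vertices with at least one child) is a connected vertex cover of G. -/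
/-!
Every edge of `G` joins an ancestor `u` to a proper descendant `v`, and the first step of the
tree path from `u` down to `v` is a child of `u`; so every edge has an internal endpoint.
The root is internal because `T` has another vertex, and every other internal vertex is a child
of its parent, which is therefore internal too: following parents inside the internal vertices
leads to the root, so they induce a connected subgraph of `T ≤ G`.
-/

namespace SimpleGraph

variable {V : Type*} {G : SimpleGraph V} {r u v : V}

lemma Reachable.exists_adj_dist_add_one_eq (h : G.Reachable u v) (hne : u ≠ v) :
    ∃ w, G.Adj u w ∧ G.dist w v + 1 = G.dist u v := by
  obtain ⟨p, hp⟩ := h.exists_walk_length_eq_dist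
  cases p with
  | nil => exact absurd rfl hne
  | @cons _ w _ hadj q =>
    refine ⟨w, hadj, le_antisymm ?_ ?_⟩
    · simpa [← hp] using dist_le q
    · simpa [dist_eq_one_iff_adj.mpr hadj, add_comm] using hadj.reachable.dist_triangle_left v

lemma Connected.exists_adj_dist_eq_add_one_of_dist_add_dist_eq (hG : G.Connected) (hne : u ≠ v)
    (h : G.dist r u + G.dist u v = G.dist r v) :
    ∃ c, G.Adj u c ∧ G.dist r c = G.dist r u + 1 := by
  obtain ⟨c, hadj, hc⟩ := (hG u v).exists_adj_dist_add_one_eq hne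
  have hrc : G.dist r c ≤ G.dist r u + 1 := by
    simpa [dist_eq_one_iff_adj.mpr hadj] using hG.dist_triangle (u := r) (v := u) (w := c)
  have hrv : G.dist r v ≤ G.dist r c + G.dist c v := hG.dist_triangle
  exact ⟨c, hadj, by omega⟩

lemma Connected.exists_adj_dist_eq_add_one_of_ne (hG : G.Connected) (hne : v ≠ r) :
    ∃ p, G.Adj p v ∧ G.dist r v = G.dist r p + 1 := by
  obtain ⟨p, hadj, hp⟩ := (hG v r).exists_adj_dist_add_one_eq hne
  exact ⟨p, hadj.symm, by rw [dist_comm, ← hp, dist_comm]⟩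

lemma induce_connected_of_forall_exists_adj_lt {S : Set V} (f : V → ℕ) (hr : r ∈ S)
    (hstep : ∀ v ∈ S, v ≠ r → ∃ p ∈ S, G.Adj v p ∧ f p < f v) :
    (G.induce S).Connected := by
  have hreach : ∀ v (hv : v ∈ S), (G.induce S).Reachable ⟨r, hr⟩ ⟨v, hv⟩ := by
    intro v
    induction v using (measure f).wf.induction with
    | h v ih =>
      intro hv
      by_cases hvr : v = r
      · subst hvr; rfl
      obtain ⟨p, hp, hadj, hlt⟩ := hstep v hv hvr
      exact (ih p hlt hp).trans (Adj.reachable (G := G.induce S) hadj.symm)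
  exact (connected_iff_exists_forall_reachable _).mpr ⟨⟨r, hr⟩, fun w ↦ hreach w.1 w.2⟩

end SimpleGraph

open SimpleGraph in
theorem dfs_internal_vertices_cvc_general {V : Type*} [Fintype V]
    (G T : SimpleGraph V) (hcard : 2 ≤ Fintype.card V)
    (hT : T.IsTree) (hsub : T ≤ G) (r : V)
    (hdfs : ∀ u v : V, G.Adj u v →
      (T.dist r u + T.dist u v = T.dist r v) ∨ (T.dist r v + T.dist v u = T.dist r u)) :
    letI S : Set V := {v : V | ∃ c : V, T.Adj v c ∧ T.dist r c = T.dist r v + 1}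
    (∀ u v : V, G.Adj u v → u ∈ S ∨ v ∈ S) ∧ (G.induce S).Connected := by
  have hTc : T.Connected := hT.connected
  refine ⟨fun u v huv ↦ ?_, ?_⟩
  · rcases hdfs u v huv with h | h
    · exact .inl (hTc.exists_adj_dist_eq_add_one_of_dist_add_dist_eq huv.ne h)
    · exact .inr (hTc.exists_adj_dist_eq_add_one_of_dist_add_dist_eq huv.ne.symm h)
  have hr : ∃ c, T.Adj r c ∧ T.dist r c = T.dist r r + 1 := by
    obtain ⟨v, hv⟩ := Fintype.exists_ne_of_one_lt_card hcard r
    exact hTc.exists_adj_dist_eq_add_one_of_dist_add_dist_eq hv.symm (by simp)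
  refine induce_connected_of_forall_exists_adj_lt (T.dist r) hr fun v _ hvr ↦ ?_
  obtain ⟨p, hadj, hp⟩ := hTc.exists_adj_dist_eq_add_one_of_ne hvr
  exact ⟨p, ⟨v, hadj, hp⟩, hsub hadj.symm, by omega⟩

/-- In a DFS spanning tree `T` of a connected graph `G` with at least 2
vertices (every edge of `G` joins an ancestor-descendant pair of `T`), the set of
internal vertices of `T` (vertices with at least one child) is a connected vertex cover
of `G`. Ancestorship in the tree is expressed via distances: `u` is an ancestor of `v`
iff `u` lies on the unique `T`-path from the root `r` to `v`, i.e.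
`T.dist r u + T.dist u v = T.dist r v`; a child of `v` is a `T`-neighbor one step
further from the root. -/
theorem dfs_internal_vertices_cvc {V : Type*} [Fintype V]
    (G T : SimpleGraph V) (hconn : G.Connected) (hcard : 2 ≤ Fintype.card V)
    (hT : T.IsTree) (hsub : T ≤ G) (r : V)
    (hdfs : ∀ u v : V, G.Adj u v →
      (T.dist r u + T.dist u v = T.dist r v) ∨ (T.dist r v + T.dist v u = T.dist r u)) :
    letI S : Set V := {v : V | ∃ c : V, T.Adj v c ∧ T.dist r c = T.dist r v + 1}
    (∀ u v : V, G.Adj u v → u ∈ S ∨ v ∈ S) ∧ (G.induce S).Connected :=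
  dfs_internal_vertices_cvc_general G T hcard hT hsub r hdfs
end
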